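/- arXiv:1011.1037 — 2 statements merged into one kernel-verified Lean document; each statement's English description precedes it below -/
import Mathlib

section
/- If U is an extremal map for the sharp vector Euclidean Sobolev inequality, i.e., (∫ F(U) dx)^{2/2*} = M_F^{2/2*} A₀(n) ∫ |∇U|² dx with U ≠ 0, then U = t u for some t ∈ S^{k−1} with F(t) = M_F and some scalar extremal function u of the sharp scalar Sobolev inequality. -/
/-!
Write `S = ∑ i, U i ^ 2`, so that `‖U‖ ^ p = S ^ (p/2)`. The vector inequality is the chain
`(∫ F(U)) ^ (2/p) ≤ M_F ^ (2/p) (∫ S ^ (p/2)) ^ (2/p) ≤ M_F ^ (2/p) ∑ i, (∫ |U i| ^ p) ^ (2/p)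
≤ M_F ^ (2/p) A₀ ∑ i, ∫ ‖∇U i‖²`, whose middle step is Minkowski's inequality in `L^(p/2)` for the
`U i ^ 2` and whose last step is the scalar inequality. For an extremal map every step is an
equality: `F(U) = M_F S ^ (p/2)` pointwise, every `U i` is a scalar extremal, and the equality case
of the Hölder inequality behind Minkowski's makes every `U i ^ 2` proportional to `S`.

Proportional squares of two extremals force proportionality of the functions themselves: if
`u ^ 2 = v ^ 2`, the halves `(u + v) / 2` and `(u - v) / 2` have disjoint supports, split the mass
of `u` exactly and together carry the mean of the energies of `u` and `v`, which the strict
subadditivity of `t ↦ t ^ (2/p)` forbids unless one of them vanishes.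
-/

open MeasureTheory Real

theorem Real.rpow_add_lt_add_rpow {x y e : ℝ} (hx : 0 < x) (hy : 0 < y) (he : e < 1) :
    (x + y) ^ e < x ^ e + y ^ e := by
  have hxy : 0 < x + y := by linarith
  have key : ∀ z : ℝ, 0 < z → z * z ^ (e - 1) = z ^ e := fun z hz => by
    rw [rpow_sub_one hz.ne', mul_div_cancel₀ _ hz.ne']
  have hx' : x * (x + y) ^ (e - 1) < x * x ^ (e - 1) :=
    mul_lt_mul_of_pos_left (rpow_lt_rpow_of_neg hx (by linarith) (by linarith)) hx
  have hy' : y * (x + y) ^ (e - 1) < y * y ^ (e - 1) :=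
    mul_lt_mul_of_pos_left (rpow_lt_rpow_of_neg hy (by linarith) (by linarith)) hy
  rw [← key _ hxy, ← key _ hx, ← key _ hy, add_mul]
  linarith

theorem Real.sq_rpow_half_eq_abs_rpow (a p : ℝ) : (a ^ 2) ^ (p / 2) = |a| ^ p := by
  rw [← sq_abs, ← rpow_two, ← rpow_mul (abs_nonneg a)]
  ring_nf

theorem Real.abs_rpow_add_abs_rpow_of_mul_eq_zero {a b p : ℝ} (hp : p ≠ 0) (h : a * b = 0) :
    |a| ^ p + |b| ^ p = |a + b| ^ p := by
  rcases mul_eq_zero.1 h with rfl | rfl <;> simp [zero_rpow hp]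

theorem Real.rpow_sub_one_rpow_conjExponent {x r : ℝ} (hx : 0 ≤ x) (hr : 1 < r) :
    (x ^ (r - 1)) ^ r.conjExponent = x ^ r := by
  rw [← rpow_mul hx, conjExponent, mul_div_cancel₀ _ (by linarith)]

theorem eq_and_eq_and_forall_eq_of_rpow_le_chain {ι : Type*} [Fintype ι] {e G T M A : ℝ}
    {m E : ι → ℝ} (he : 0 < e) (hG : 0 ≤ G) (hT : 0 ≤ T) (hM : 0 < M) (h₁ : G ≤ M * T)
    (h₂ : T ^ e ≤ ∑ i, m i) (h₃ : ∀ i, m i ≤ A * E i) (h : G ^ e = M ^ e * A * ∑ i, E i) :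
    G = M * T ∧ T ^ e = ∑ i, m i ∧ ∀ i, m i = A * E i := by
  have hMe : 0 < M ^ e := rpow_pos_of_pos hM e
  have hsum : ∑ i, m i ≤ A * ∑ i, E i := by
    rw [Finset.mul_sum]; exact Finset.sum_le_sum fun i _ => h₃ i
  have hGe : G ^ e ≤ M ^ e * T ^ e := by
    rw [← mul_rpow hM.le hT]; exact rpow_le_rpow hG h₁ he.le
  have hle₂ := mul_le_mul_of_nonneg_left h₂ hMe.le
  have hle₃ := mul_le_mul_of_nonneg_left hsum hMe.le
  have hTeq : T ^ e = ∑ i, m i := le_antisymm h₂ (le_of_mul_le_mul_left (by nlinarith) hMe)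
  have hmeq : ∑ i, m i = A * ∑ i, E i := le_antisymm hsum (le_of_mul_le_mul_left (by nlinarith) hMe)
  refine ⟨?_, hTeq, fun i => ?_⟩
  · refine (rpow_left_injOn he.ne' hG (mul_nonneg hM.le hT) ?_)
    simp only [mul_rpow hM.le hT]
    nlinarith
  · rw [Finset.mul_sum] at hmeq
    exact (Finset.sum_eq_sum_iff_of_le fun i _ => h₃ i).1 hmeq i (Finset.mem_univ i)

theorem sq_mul_sq_comm_of_abs_rpow_mul_eq {ι X : Type*} {U : ι → X → ℝ} {N : X → ℝ} {m : ι → ℝ}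
    {T p : ℝ} (hT : T ≠ 0) (hp : p ≠ 0) (h : ∀ i x, |U i x| ^ p * T = N x * m i) (i j : ι)
    (x y : X) : U i x ^ 2 * U j y ^ 2 = U i y ^ 2 * U j x ^ 2 := by
  have hpow : (|U i x| * |U j y|) ^ p = (|U i y| * |U j x|) ^ p := by
    rw [mul_rpow (abs_nonneg _) (abs_nonneg _), mul_rpow (abs_nonneg _) (abs_nonneg _)]
    refine mul_right_cancel₀ (mul_ne_zero hT hT) ?_
    calc |U i x| ^ p * |U j y| ^ p * (T * T) = (|U i x| ^ p * T) * (|U j y| ^ p * T) := by ring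
      _ = (|U i y| ^ p * T) * (|U j x| ^ p * T) := by rw [h, h, h, h]; ring
      _ = |U i y| ^ p * |U j x| ^ p * (T * T) := by ring
  have habs := rpow_left_injOn hp (by positivity : (0:ℝ) ≤ |U i x| * |U j y|)
    (by positivity : (0:ℝ) ≤ |U i y| * |U j x|) hpow
  have := congrArg (· ^ 2) habs
  simp only [mul_pow, sq_abs] at this
  exact this

section ScaledYoung

variable {r s a b A B : ℝ}

private lemma scaled_young_eq (hrs : r.HolderConjugate s) (ha : 0 ≤ a) (hb : 0 ≤ b)
    (hA : 0 < A) (hB : 0 < B) :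
    A ^ r⁻¹ * B ^ s⁻¹ * (a ^ r / (r * A) + b ^ s / (s * B)) =
      A ^ r⁻¹ * B ^ s⁻¹ * ((a / A ^ r⁻¹) ^ r / r + (b / B ^ s⁻¹) ^ s / s) := by
  rw [div_rpow ha (by positivity), div_rpow hb (by positivity),
    rpow_inv_rpow hA.le hrs.ne_zero, rpow_inv_rpow hB.le hrs.symm.ne_zero]
  ring

theorem Real.mul_le_scaled_young (hrs : r.HolderConjugate s) (ha : 0 ≤ a) (hb : 0 ≤ b)
    (hA : 0 < A) (hB : 0 < B) :
    a * b ≤ A ^ r⁻¹ * B ^ s⁻¹ * (a ^ r / (r * A) + b ^ s / (s * B)) := by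
  have hc : 0 < A ^ r⁻¹ := rpow_pos_of_pos hA _
  have hd : 0 < B ^ s⁻¹ := rpow_pos_of_pos hB _
  rw [scaled_young_eq hrs ha hb hA hB]
  calc a * b = A ^ r⁻¹ * B ^ s⁻¹ * (a / A ^ r⁻¹ * (b / B ^ s⁻¹)) := by field_simp
    _ ≤ _ := by gcongr; exact young_inequality_of_nonneg (by positivity) (by positivity) hrs

theorem Real.mul_eq_scaled_young_iff (hrs : r.HolderConjugate s) (ha : 0 ≤ a) (hb : 0 ≤ b)
    (hA : 0 < A) (hB : 0 < B) :
    a * b = A ^ r⁻¹ * B ^ s⁻¹ * (a ^ r / (r * A) + b ^ s / (s * B)) ↔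
      a ^ r * B = b ^ s * A := by
  have hc : 0 < A ^ r⁻¹ := rpow_pos_of_pos hA _
  have hd : 0 < B ^ s⁻¹ := rpow_pos_of_pos hB _
  have hab : a * b = A ^ r⁻¹ * B ^ s⁻¹ * (a / A ^ r⁻¹ * (b / B ^ s⁻¹)) := by field_simp
  rw [scaled_young_eq hrs ha hb hA hB, hab, mul_right_inj' (by positivity),
    young_inequality_eq_iff_of_nonneg (by positivity) (by positivity) hrs,
    div_rpow ha hc.le, div_rpow hb hd.le, rpow_inv_rpow hA.le hrs.ne_zero,
    rpow_inv_rpow hB.le hrs.symm.ne_zero, div_eq_div_iff hA.ne' hB.ne']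

end ScaledYoung

section Holder

variable {α : Type*} [MeasurableSpace α] {μ : Measure α} {r s : ℝ} {f g : α → ℝ}

theorem ae_eq_zero_of_integral_rpow_eq_zero (hr : r ≠ 0) (hf0 : 0 ≤ f)
    (hfi : Integrable (fun x => f x ^ r) μ) (h : ∫ x, f x ^ r ∂μ = 0) : f =ᵐ[μ] 0 := by
  filter_upwards [(integral_eq_zero_iff_of_nonneg (fun x => rpow_nonneg (hf0 x) r) hfi).1 h]
    with x hx
  exact (rpow_eq_zero (hf0 x) hr).1 hx

theorem integrable_mul_of_holderConjugate (hrs : r.HolderConjugate s) (hf0 : 0 ≤ f)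
    (hg0 : 0 ≤ g) (hfm : AEStronglyMeasurable f μ) (hgm : AEStronglyMeasurable g μ)
    (hfi : Integrable (fun x => f x ^ r) μ) (hgi : Integrable (fun x => g x ^ s) μ) :
    Integrable (fun x => f x * g x) μ :=
  ((hfi.div_const r).add (hgi.div_const s)).mono' (hfm.mul hgm) <| .of_forall fun x => by
    rw [norm_of_nonneg (mul_nonneg (hf0 x) (hg0 x))]
    exact young_inequality_of_nonneg (hf0 x) (hg0 x) hrs

theorem integral_scaled_young (hrs : r.HolderConjugate s)
    (hfi : Integrable (fun x => f x ^ r) μ) (hgi : Integrable (fun x => g x ^ s) μ)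
    {A B : ℝ} (hA : ∫ x, f x ^ r ∂μ = A) (hB : ∫ x, g x ^ s ∂μ = B) (hA0 : 0 < A) (hB0 : 0 < B) :
    ∫ x, A ^ r⁻¹ * B ^ s⁻¹ * (f x ^ r / (r * A) + g x ^ s / (s * B)) ∂μ = A ^ r⁻¹ * B ^ s⁻¹ := by
  rw [integral_const_mul, integral_add (hfi.div_const _) (hgi.div_const _), integral_div,
    integral_div, hA, hB, div_mul_cancel_right₀ hA0.ne', div_mul_cancel_right₀ hB0.ne',
    hrs.inv_add_inv_eq_one, mul_one]

theorem integral_mul_le_of_holderConjugate (hrs : r.HolderConjugate s) (hf0 : 0 ≤ f)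
    (hg0 : 0 ≤ g) (hfm : AEStronglyMeasurable f μ) (hgm : AEStronglyMeasurable g μ)
    (hfi : Integrable (fun x => f x ^ r) μ) (hgi : Integrable (fun x => g x ^ s) μ) :
    ∫ x, f x * g x ∂μ ≤ (∫ x, f x ^ r ∂μ) ^ r⁻¹ * (∫ x, g x ^ s ∂μ) ^ s⁻¹ := by
  set A := ∫ x, f x ^ r ∂μ with hA
  set B := ∫ x, g x ^ s ∂μ with hB
  have hA0 : 0 ≤ A := integral_nonneg fun x => rpow_nonneg (hf0 x) r
  have hB0 : 0 ≤ B := integral_nonneg fun x => rpow_nonneg (hg0 x) s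
  have hAB : 0 ≤ A ^ r⁻¹ * B ^ s⁻¹ := by positivity
  rcases hA0.eq_or_lt with hA0 | hA0
  · have hf := ae_eq_zero_of_integral_rpow_eq_zero hrs.ne_zero hf0 hfi hA0.symm
    rwa [integral_eq_zero_of_ae (by filter_upwards [hf] with x hx; simp [hx])]
  rcases hB0.eq_or_lt with hB0 | hB0
  · have hg := ae_eq_zero_of_integral_rpow_eq_zero hrs.symm.ne_zero hg0 hgi hB0.symm
    rwa [integral_eq_zero_of_ae (by filter_upwards [hg] with x hx; simp [hx])]
  rw [← integral_scaled_young hrs hfi hgi hA.symm hB.symm hA0 hB0]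
  exact integral_mono (integrable_mul_of_holderConjugate hrs hf0 hg0 hfm hgm hfi hgi)
    (((hfi.div_const _).add (hgi.div_const _)).const_mul _)
    fun x => mul_le_scaled_young hrs (hf0 x) (hg0 x) hA0 hB0

theorem ae_rpow_mul_integral_eq_of_integral_mul_eq (hrs : r.HolderConjugate s) (hf0 : 0 ≤ f)
    (hg0 : 0 ≤ g) (hfm : AEStronglyMeasurable f μ) (hgm : AEStronglyMeasurable g μ)
    (hfi : Integrable (fun x => f x ^ r) μ) (hgi : Integrable (fun x => g x ^ s) μ)
    (heq : ∫ x, f x * g x ∂μ = (∫ x, f x ^ r ∂μ) ^ r⁻¹ * (∫ x, g x ^ s ∂μ) ^ s⁻¹) :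
    ∀ᵐ x ∂μ, f x ^ r * ∫ x, g x ^ s ∂μ = g x ^ s * ∫ x, f x ^ r ∂μ := by
  set A := ∫ x, f x ^ r ∂μ with hA
  set B := ∫ x, g x ^ s ∂μ with hB
  have hA0 : 0 ≤ A := integral_nonneg fun x => rpow_nonneg (hf0 x) r
  have hB0 : 0 ≤ B := integral_nonneg fun x => rpow_nonneg (hg0 x) s
  rcases hA0.eq_or_lt with hA0 | hA0
  · filter_upwards [ae_eq_zero_of_integral_rpow_eq_zero hrs.ne_zero hf0 hfi hA0.symm] with x hx
    simp [hx, ← hA0, zero_rpow hrs.ne_zero]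
  rcases hB0.eq_or_lt with hB0 | hB0
  · filter_upwards [ae_eq_zero_of_integral_rpow_eq_zero hrs.symm.ne_zero hg0 hgi hB0.symm]
      with x hx
    simp [hx, ← hB0, zero_rpow hrs.symm.ne_zero]
  have hbound : Integrable
      (fun x => A ^ r⁻¹ * B ^ s⁻¹ * (f x ^ r / (r * A) + g x ^ s / (s * B))) μ :=
    ((hfi.div_const _).add (hgi.div_const _)).const_mul _
  have hdefect := (integral_eq_zero_iff_of_nonneg
    (fun x => sub_nonneg.2 (mul_le_scaled_young hrs (hf0 x) (hg0 x) hA0 hB0))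
    (hbound.sub (integrable_mul_of_holderConjugate hrs hf0 hg0 hfm hgm hfi hgi))).1 (by
      rw [integral_sub hbound (integrable_mul_of_holderConjugate hrs hf0 hg0 hfm hgm hfi hgi),
        integral_scaled_young hrs hfi hgi hA.symm hB.symm hA0 hB0, heq, sub_self])
  filter_upwards [hdefect] with x hx
  exact (mul_eq_scaled_young_iff hrs (hf0 x) (hg0 x) hA0 hB0).1 (sub_eq_zero.1 hx).symm

end Holder

theorem integral_abs_const_mul_rpow {α : Type*} [MeasurableSpace α] {μ : Measure α} (p c : ℝ)
    (u : α → ℝ) : ∫ x, |c * u x| ^ p ∂μ = |c| ^ p * ∫ x, |u x| ^ p ∂μ := by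
  simp only [abs_mul, mul_rpow (abs_nonneg _) (abs_nonneg _), integral_const_mul]

theorem eq_of_integral_eq_of_le {X : Type*} [TopologicalSpace X] [MeasurableSpace X]
    {μ : Measure X} [μ.IsOpenPosMeasure] {f g : X → ℝ} (hf : Continuous f) (hg : Continuous g)
    (hfi : Integrable f μ) (hgi : Integrable g μ) (hfg : f ≤ g) (h : ∫ x, f x ∂μ = ∫ x, g x ∂μ) :
    f = g :=
  (hf.ae_eq_iff_eq μ hg).1 ((integral_eq_iff_of_ae_le hfi hgi (.of_forall hfg)).1 h)

theorem eq_zero_of_integral_abs_rpow_eq_zero {X : Type*} [TopologicalSpace X] [MeasurableSpace X]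
    {μ : Measure X} [μ.IsOpenPosMeasure] {p : ℝ} {w : X → ℝ} (hp : p ≠ 0) (hw : Continuous w)
    (hwi : Integrable (fun x => |w x| ^ p) μ) (h : ∫ x, |w x| ^ p ∂μ = 0) : w = 0 := by
  have := (hw.abs.ae_eq_iff_eq μ continuous_zero).1 <|
    ae_eq_zero_of_integral_rpow_eq_zero hp (fun x => abs_nonneg (w x)) hwi h
  simpa [funext_iff] using this

section Minkowski

variable {α : Type*} [MeasurableSpace α] {μ : Measure α} {ι : Type*} [Fintype ι] {r : ℝ}
  {f : ι → α → ℝ}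

theorem integrable_rpow_sum (hr : 1 ≤ r) (hf0 : ∀ i, 0 ≤ f i)
    (hfm : ∀ i, AEStronglyMeasurable (f i) μ) (hfi : ∀ i, Integrable (fun x => f i x ^ r) μ) :
    Integrable (fun x => (∑ i, f i x) ^ r) μ := by
  refine ((integrable_finsetSum Finset.univ fun i _ => hfi i).const_mul
    ((Fintype.card ι : ℝ) ^ (r - 1))).mono' ?_ (.of_forall fun x => ?_)
  · exact ((Finset.aestronglyMeasurable_fun_sum _ fun i _ => hfm i).aemeasurable.pow_const
      r).aestronglyMeasurable
  · rw [norm_of_nonneg (rpow_nonneg (Finset.sum_nonneg fun i _ => hf0 i x) r)]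
    simpa using rpow_sum_le_const_mul_sum_rpow_of_nonneg (s := Finset.univ) hr fun i _ => hf0 i x

private theorem rpow_sum_rpow_sub_one_properties (hr : 1 < r) (hf0 : ∀ i, 0 ≤ f i)
    (hfm : ∀ i, AEStronglyMeasurable (f i) μ) (hfi : ∀ i, Integrable (fun x => f i x ^ r) μ) :
    AEStronglyMeasurable (fun x => (∑ j, f j x) ^ (r - 1)) μ ∧
    Integrable (fun x => ((∑ j, f j x) ^ (r - 1)) ^ r.conjExponent) μ := by
  refine ⟨((Finset.aestronglyMeasurable_fun_sum _ fun j _ => hfm j).aemeasurable.pow_const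
      _).aestronglyMeasurable, ?_⟩
  simpa only [rpow_sub_one_rpow_conjExponent (Finset.sum_nonneg fun j _ => hf0 j _) hr] using
    integrable_rpow_sum hr.le hf0 hfm hfi

theorem integral_mul_rpow_sum_le (hr : 1 < r) (hf0 : ∀ i, 0 ≤ f i)
    (hfm : ∀ i, AEStronglyMeasurable (f i) μ) (hfi : ∀ i, Integrable (fun x => f i x ^ r) μ)
    (i : ι) :
    Integrable (fun x => f i x * (∑ j, f j x) ^ (r - 1)) μ ∧
    ∫ x, f i x * (∑ j, f j x) ^ (r - 1) ∂μ ≤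
      (∫ x, f i x ^ r ∂μ) ^ r⁻¹ * (∫ x, (∑ j, f j x) ^ r ∂μ) ^ r.conjExponent⁻¹ := by
  have hS0 x : 0 ≤ ∑ j, f j x := Finset.sum_nonneg fun j _ => hf0 j x
  obtain ⟨hgm, hgi⟩ := rpow_sum_rpow_sub_one_properties hr hf0 hfm hfi
  have hrs := HolderConjugate.conjExponent hr
  refine ⟨integrable_mul_of_holderConjugate hrs (hf0 i) (fun x => rpow_nonneg (hS0 x) _)
    (hfm i) hgm (hfi i) hgi, ?_⟩
  simpa only [rpow_sub_one_rpow_conjExponent (hS0 _) hr] using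
    integral_mul_le_of_holderConjugate hrs (hf0 i) (fun x => rpow_nonneg (hS0 x) _)
      (hfm i) hgm (hfi i) hgi

theorem sum_integral_mul_rpow_sum_eq (hr : 1 < r) (hf0 : ∀ i, 0 ≤ f i)
    (hfm : ∀ i, AEStronglyMeasurable (f i) μ) (hfi : ∀ i, Integrable (fun x => f i x ^ r) μ) :
    ∑ i, ∫ x, f i x * (∑ j, f j x) ^ (r - 1) ∂μ = ∫ x, (∑ j, f j x) ^ r ∂μ := by
  rw [← integral_finsetSum _ fun i _ => (integral_mul_rpow_sum_le hr hf0 hfm hfi i).1]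
  refine integral_congr_ae (.of_forall fun x => ?_)
  have hS0 : 0 ≤ ∑ j, f j x := Finset.sum_nonneg fun j _ => hf0 j x
  simp only
  rw [← Finset.sum_mul, mul_comm, ← rpow_add_one' hS0 (by linarith), sub_add_cancel]

theorem rpow_integral_rpow_sum_le (hr : 1 < r) (hf0 : ∀ i, 0 ≤ f i)
    (hfm : ∀ i, AEStronglyMeasurable (f i) μ) (hfi : ∀ i, Integrable (fun x => f i x ^ r) μ) :
    (∫ x, (∑ i, f i x) ^ r ∂μ) ^ r⁻¹ ≤ ∑ i, (∫ x, f i x ^ r ∂μ) ^ r⁻¹ := by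
  set T := ∫ x, (∑ i, f i x) ^ r ∂μ
  have hT0 : 0 ≤ T := integral_nonneg fun x => rpow_nonneg (Finset.sum_nonneg fun i _ => hf0 i x) r
  rcases hT0.eq_or_lt with hT | hT
  · rw [← hT, zero_rpow (inv_ne_zero (by linarith))]
    exact Finset.sum_nonneg fun i _ =>
      rpow_nonneg (integral_nonneg fun x => rpow_nonneg (hf0 i x) r) _
  refine le_of_mul_le_mul_right ?_ (rpow_pos_of_pos hT r.conjExponent⁻¹)
  rw [← rpow_add hT, (HolderConjugate.conjExponent hr).inv_add_inv_eq_one, rpow_one,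
    Finset.sum_mul]
  calc T = ∑ i, ∫ x, f i x * (∑ j, f j x) ^ (r - 1) ∂μ :=
        (sum_integral_mul_rpow_sum_eq hr hf0 hfm hfi).symm
    _ ≤ _ := Finset.sum_le_sum fun i _ => (integral_mul_rpow_sum_le hr hf0 hfm hfi i).2

theorem ae_rpow_mul_integral_eq_of_rpow_integral_rpow_sum_eq (hr : 1 < r) (hf0 : ∀ i, 0 ≤ f i)
    (hfm : ∀ i, AEStronglyMeasurable (f i) μ) (hfi : ∀ i, Integrable (fun x => f i x ^ r) μ)
    (heq : (∫ x, (∑ i, f i x) ^ r ∂μ) ^ r⁻¹ = ∑ i, (∫ x, f i x ^ r ∂μ) ^ r⁻¹) (i : ι) :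
    ∀ᵐ x ∂μ, f i x ^ r * ∫ x, (∑ j, f j x) ^ r ∂μ = (∑ j, f j x) ^ r * ∫ x, f i x ^ r ∂μ := by
  have hS0 x : 0 ≤ ∑ j, f j x := Finset.sum_nonneg fun j _ => hf0 j x
  have hT0 : 0 ≤ ∫ x, (∑ i, f i x) ^ r ∂μ := integral_nonneg fun x => rpow_nonneg (hS0 x) r
  have hrs := HolderConjugate.conjExponent hr
  obtain ⟨hgm, hgi⟩ := rpow_sum_rpow_sub_one_properties hr hf0 hfm hfi
  have hterm := (Finset.sum_eq_sum_iff_of_le fun i _ =>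
    (integral_mul_rpow_sum_le hr hf0 hfm hfi i).2).1 (by
      rw [sum_integral_mul_rpow_sum_eq hr hf0 hfm hfi, ← Finset.sum_mul, ← heq,
        ← rpow_add' hT0 (by rw [hrs.inv_add_inv_eq_one]; norm_num),
        hrs.inv_add_inv_eq_one, rpow_one]) i (Finset.mem_univ i)
  simpa only [rpow_sub_one_rpow_conjExponent (hS0 _) hr] using
    ae_rpow_mul_integral_eq_of_integral_mul_eq hrs (hf0 i) (fun x => rpow_nonneg (hS0 x) _)
      (hfm i) hgm (hfi i) hgi (by simpa only [rpow_sub_one_rpow_conjExponent (hS0 _) hr])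

end Minkowski

theorem EuclideanSpace.sum_sq_rpow_half_eq_norm_toLp_rpow {ι : Type*} [Fintype ι] (f : ι → ℝ)
    (p : ℝ) : (∑ i, f i ^ 2) ^ (p / 2) = ‖WithLp.toLp 2 f‖ ^ p := by
  rw [← abs_norm, ← sq_rpow_half_eq_abs_rpow, real_norm_sq_eq]

section EuclideanMinkowski

variable {α : Type*} [MeasurableSpace α] {μ : Measure α} {ι : Type*} [Fintype ι] {p : ℝ}
  {U : ι → α → ℝ}

theorem integrable_norm_toLp_rpow (hp : 2 ≤ p) (hUm : ∀ i, AEStronglyMeasurable (U i) μ)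
    (hUi : ∀ i, Integrable (fun x => |U i x| ^ p) μ) :
    Integrable (fun x => ‖WithLp.toLp 2 (fun i => U i x)‖ ^ p) μ := by
  simpa only [sq_rpow_half_eq_abs_rpow, EuclideanSpace.sum_sq_rpow_half_eq_norm_toLp_rpow] using
    integrable_rpow_sum (f := fun i x => U i x ^ 2) (r := p / 2) (by linarith)
      (fun i x => sq_nonneg _) (fun i => (hUm i).pow 2)
      (by simpa only [sq_rpow_half_eq_abs_rpow] using hUi)

theorem rpow_integral_norm_toLp_rpow_le (hp : 2 < p) (hUm : ∀ i, AEStronglyMeasurable (U i) μ)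
    (hUi : ∀ i, Integrable (fun x => |U i x| ^ p) μ) :
    (∫ x, ‖WithLp.toLp 2 (fun i => U i x)‖ ^ p ∂μ) ^ (2 / p) ≤
      ∑ i, (∫ x, |U i x| ^ p ∂μ) ^ (2 / p) := by
  simpa only [sq_rpow_half_eq_abs_rpow, EuclideanSpace.sum_sq_rpow_half_eq_norm_toLp_rpow,
    inv_div] using
    rpow_integral_rpow_sum_le (f := fun i x => U i x ^ 2) (r := p / 2) (by linarith)
      (fun i x => sq_nonneg _) (fun i => (hUm i).pow 2)
      (by simpa only [sq_rpow_half_eq_abs_rpow] using hUi)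

theorem ae_abs_rpow_mul_integral_eq_of_rpow_integral_norm_toLp_rpow_eq (hp : 2 < p)
    (hUm : ∀ i, AEStronglyMeasurable (U i) μ) (hUi : ∀ i, Integrable (fun x => |U i x| ^ p) μ)
    (heq : (∫ x, ‖WithLp.toLp 2 (fun i => U i x)‖ ^ p ∂μ) ^ (2 / p) =
      ∑ i, (∫ x, |U i x| ^ p ∂μ) ^ (2 / p)) (i : ι) :
    ∀ᵐ x ∂μ, |U i x| ^ p * ∫ x, ‖WithLp.toLp 2 (fun i => U i x)‖ ^ p ∂μ =
      ‖WithLp.toLp 2 (fun i => U i x)‖ ^ p * ∫ x, |U i x| ^ p ∂μ := by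
  simpa only [sq_rpow_half_eq_abs_rpow, EuclideanSpace.sum_sq_rpow_half_eq_norm_toLp_rpow] using
    ae_rpow_mul_integral_eq_of_rpow_integral_rpow_sum_eq (f := fun i x => U i x ^ 2) (r := p / 2)
      (by linarith) (fun i x => sq_nonneg _) (fun i => (hUm i).pow 2)
      (by simpa only [sq_rpow_half_eq_abs_rpow] using hUi)
      (by simpa only [sq_rpow_half_eq_abs_rpow, EuclideanSpace.sum_sq_rpow_half_eq_norm_toLp_rpow,
        inv_div] using heq) i

end EuclideanMinkowski

section Homogeneous

variable {V : Type*} [NormedAddCommGroup V] [NormedSpace ℝ V] {F : V → ℝ} {p M : ℝ}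

theorem apply_zero_of_homogeneous (hp : 0 < p)
    (hF : ∀ l : ℝ, 0 < l → ∀ t, F (l • t) = l ^ p * F t) : F 0 = 0 := by
  have h := hF 2 two_pos 0
  rw [smul_zero] at h
  nlinarith [one_lt_rpow one_lt_two hp]

theorem apply_eq_norm_rpow_mul_apply_normalize (hF : ∀ l : ℝ, 0 < l → ∀ t, F (l • t) = l ^ p * F t)
    {y : V} (hy : y ≠ 0) : F y = ‖y‖ ^ p * F (‖y‖⁻¹ • y) := by
  rw [← hF _ (norm_pos_iff.2 hy), smul_inv_smul₀ (norm_ne_zero_iff.2 hy)]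

theorem apply_le_mul_norm_rpow (hp : 0 < p) (hF : ∀ l : ℝ, 0 < l → ∀ t, F (l • t) = l ^ p * F t)
    (hM : IsGreatest (F '' {t | ‖t‖ = 1}) M) (y : V) : F y ≤ M * ‖y‖ ^ p := by
  rcases eq_or_ne y 0 with rfl | hy
  · simp [apply_zero_of_homogeneous hp hF, zero_rpow hp.ne']
  rw [apply_eq_norm_rpow_mul_apply_normalize hF hy, mul_comm M]
  refine mul_le_mul_of_nonneg_left (hM.2 ⟨_, ?_, rfl⟩) (by positivity)
  simp [norm_smul, norm_ne_zero_iff.2 hy]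

end Homogeneous

theorem parallelogram_law_with_norm_strongDual {E : Type*} [NormedAddCommGroup E]
    [InnerProductSpace ℝ E] [CompleteSpace E] (φ ψ : StrongDual ℝ E) :
    ‖φ + ψ‖ ^ 2 + ‖φ - ψ‖ ^ 2 = 2 * (‖φ‖ ^ 2 + ‖ψ‖ ^ 2) := by
  simpa only [← map_add, ← map_sub, LinearIsometryEquiv.norm_map] using
    parallelogram_law_with_norm ℝ ((InnerProductSpace.toDual ℝ E).symm φ)
      ((InnerProductSpace.toDual ℝ E).symm ψ)

section Sobolev

variable {E : Type*} [NormedAddCommGroup E] [NormedSpace ℝ E] [MeasurableSpace E]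
  {μ : Measure E} {p A₀ : ℝ} {u v : E → ℝ}

def IsSobolevAdmissible (μ : Measure E) (p : ℝ) (u : E → ℝ) : Prop :=
  Differentiable ℝ u ∧ Integrable (fun x => |u x| ^ p) μ ∧
    Integrable (fun x => ‖fderiv ℝ u x‖ ^ 2) μ

def SobolevInequality (μ : Measure E) (p A₀ : ℝ) : Prop :=
  ∀ u, IsSobolevAdmissible μ p u →
    (∫ x, |u x| ^ p ∂μ) ^ (2 / p) ≤ A₀ * ∫ x, ‖fderiv ℝ u x‖ ^ 2 ∂μ

def IsSobolevExtremal (μ : Measure E) (p A₀ : ℝ) (u : E → ℝ) : Prop :=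
  (∫ x, |u x| ^ p ∂μ) ^ (2 / p) = A₀ * ∫ x, ‖fderiv ℝ u x‖ ^ 2 ∂μ

theorem integral_norm_fderiv_const_mul_sq (hu : Differentiable ℝ u) (c : ℝ) :
    ∫ x, ‖fderiv ℝ (fun y => c * u y) x‖ ^ 2 ∂μ = c ^ 2 * ∫ x, ‖fderiv ℝ u x‖ ^ 2 ∂μ := by
  simp only [fderiv_const_mul (hu _), norm_smul, mul_pow, Real.norm_eq_abs, sq_abs,
    integral_const_mul]

theorem IsSobolevAdmissible.const_mul (hu : IsSobolevAdmissible μ p u) (c : ℝ) :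
    IsSobolevAdmissible μ p (fun x => c * u x) := by
  refine ⟨hu.1.const_mul c, ?_, ?_⟩
  · simpa only [abs_mul, mul_rpow (abs_nonneg _) (abs_nonneg _)] using hu.2.1.const_mul (|c| ^ p)
  · simpa only [fderiv_const_mul (hu.1 _), norm_smul, mul_pow, Real.norm_eq_abs, sq_abs] using
      hu.2.2.const_mul (c ^ 2)

theorem IsSobolevExtremal.const_mul (hp : 0 < p) (hu : Differentiable ℝ u)
    (he : IsSobolevExtremal μ p A₀ u) (c : ℝ) : IsSobolevExtremal μ p A₀ (fun x => c * u x) := by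
  rw [IsSobolevExtremal, integral_abs_const_mul_rpow, integral_norm_fderiv_const_mul_sq hu,
    mul_rpow (by positivity) (integral_nonneg fun x => by positivity), he,
    ← rpow_mul (abs_nonneg c), mul_div_cancel₀ _ hp.ne', rpow_two, sq_abs]
  ring

theorem IsSobolevAdmissible.of_le [OpensMeasurableSpace E] {w g h : E → ℝ}
    (hw : Differentiable ℝ w) (hp : 0 ≤ p) (hwg : ∀ x, |w x| ^ p ≤ g x) (hg : Integrable g μ)
    (hwh : ∀ x, ‖fderiv ℝ w x‖ ^ 2 ≤ h x) (hh : Integrable h μ) : IsSobolevAdmissible μ p w := by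
  refine ⟨hw, hg.mono' (hw.continuous.abs.rpow_const fun _ => .inr hp).aestronglyMeasurable
    (.of_forall fun x => ?_),
    hh.mono' ((measurable_fderiv ℝ w).norm.pow_const 2).aestronglyMeasurable
      (.of_forall fun x => ?_)⟩
  · rw [norm_of_nonneg (by positivity)]; exact hwg x
  · rw [norm_of_nonneg (by positivity)]; exact hwh x

theorem SobolevInequality.integral_eq_zero_or_integral_eq_zero {a b : E → ℝ}
    (hS : SobolevInequality μ p A₀) (hp : 2 < p) (ha : IsSobolevAdmissible μ p a)
    (hb : IsSobolevAdmissible μ p b)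
    (h : A₀ * (∫ x, ‖fderiv ℝ a x‖ ^ 2 ∂μ + ∫ x, ‖fderiv ℝ b x‖ ^ 2 ∂μ) ≤
      (∫ x, |a x| ^ p ∂μ + ∫ x, |b x| ^ p ∂μ) ^ (2 / p)) :
    ∫ x, |a x| ^ p ∂μ = 0 ∨ ∫ x, |b x| ^ p ∂μ = 0 := by
  by_contra! hne
  have hlt := rpow_add_lt_add_rpow
    ((integral_nonneg fun x => by positivity).lt_of_ne' hne.1)
    ((integral_nonneg fun x => by positivity).lt_of_ne' hne.2) ((div_lt_one (by linarith)).2 hp)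
  linarith [hS a ha, hS b hb]

end Sobolev

section VectorExtremal

variable {E : Type*} [NormedAddCommGroup E] [NormedSpace ℝ E] [MeasurableSpace E]
  [OpensMeasurableSpace E] {μ : Measure E} [μ.IsOpenPosMeasure] {p A₀ M : ℝ} {ι : Type*}
  [Fintype ι] {F : EuclideanSpace ℝ ι → ℝ} {U : ι → E → ℝ}

theorem SobolevInequality.forall_isSobolevExtremal_and_eq_of_vector_extremal
    (hS : SobolevInequality μ p A₀) (hp : 2 < p) (hFcont : Continuous F)
    (hFpos : ∀ t, t ≠ 0 → 0 < F t) (hFhom : ∀ l : ℝ, 0 < l → ∀ t, F (l • t) = l ^ p * F t)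
    (hM : IsGreatest (F '' {t | ‖t‖ = 1}) M) (hU : ∀ i, IsSobolevAdmissible μ p (U i))
    (hext : (∫ x, F (WithLp.toLp 2 (fun i => U i x)) ∂μ) ^ (2 / p) =
      M ^ (2 / p) * A₀ * ∑ i, ∫ x, ‖fderiv ℝ (U i) x‖ ^ 2 ∂μ) :
    (∀ i, IsSobolevExtremal μ p A₀ (U i)) ∧
    (∀ x, F (WithLp.toLp 2 (fun i => U i x)) = M * ‖WithLp.toLp 2 (fun i => U i x)‖ ^ p) ∧
    ∀ i x, |U i x| ^ p * ∫ x, ‖WithLp.toLp 2 (fun i => U i x)‖ ^ p ∂μ =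
      ‖WithLp.toLp 2 (fun i => U i x)‖ ^ p * ∫ x, |U i x| ^ p ∂μ := by
  have hUc i : Continuous (U i) := (hU i).1.continuous
  have hVc : Continuous fun x => WithLp.toLp 2 (fun i => U i x) :=
    (PiLp.continuous_toLp 2 _).comp (continuous_pi hUc)
  have hNc : Continuous fun x => ‖WithLp.toLp 2 (fun i => U i x)‖ ^ p :=
    hVc.norm.rpow_const fun _ => .inr (by linarith)
  have hUm i := (hUc i).aestronglyMeasurable (μ := μ)
  have hNi := integrable_norm_toLp_rpow hp.le hUm fun i => (hU i).2.1
  have hM0 : 0 < M := by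
    obtain ⟨t, ht, rfl⟩ := hM.1
    exact hFpos t (by rintro rfl; simp at ht)
  have hF0 y : 0 ≤ F y := by
    rcases eq_or_ne y 0 with rfl | hy
    · exact (apply_zero_of_homogeneous (by linarith) hFhom).ge
    · exact (hFpos y hy).le
  have hFle y := apply_le_mul_norm_rpow (by linarith) hFhom hM y
  have hGi : Integrable (fun x => F (WithLp.toLp 2 (fun i => U i x))) μ :=
    (hNi.const_mul M).mono' (hFcont.comp hVc).aestronglyMeasurable
      (.of_forall fun x => by rw [norm_of_nonneg (hF0 _)]; exact hFle _)
  obtain ⟨hGeq, hTeq, hEeq⟩ := eq_and_eq_and_forall_eq_of_rpow_le_chain (by positivity)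
    (integral_nonneg fun x => hF0 _) (integral_nonneg fun x => by positivity) hM0
    (by rw [← integral_const_mul]; exact integral_mono hGi (hNi.const_mul M) fun x => hFle _)
    (rpow_integral_norm_toLp_rpow_le hp hUm fun i => (hU i).2.1) (fun i => hS _ (hU i)) hext
  refine ⟨hEeq, congrFun (eq_of_integral_eq_of_le (hFcont.comp hVc) (continuous_const.mul hNc)
    hGi (hNi.const_mul M) (fun x => hFle _) (by rw [integral_const_mul, hGeq])), fun i => ?_⟩
  refine congrFun ((Continuous.ae_eq_iff_eq μ ?_ ?_).1
    (ae_abs_rpow_mul_integral_eq_of_rpow_integral_norm_toLp_rpow_eq hp hUm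
      (fun i => (hU i).2.1) hTeq i))
  · exact ((hUc i).abs.rpow_const fun _ => .inr (by linarith)).mul continuous_const
  · exact hNc.mul continuous_const

end VectorExtremal

section InnerProductSpace

variable {E : Type*} [NormedAddCommGroup E] [InnerProductSpace ℝ E] [CompleteSpace E]
  {u v : E → ℝ}

theorem norm_fderiv_half_add_sq_add_norm_fderiv_half_sub_sq {x : E}
    (hu : DifferentiableAt ℝ u x) (hv : DifferentiableAt ℝ v x) :
    ‖fderiv ℝ (fun y => 2⁻¹ * (u y + v y)) x‖ ^ 2 + ‖fderiv ℝ (fun y => 2⁻¹ * (u y - v y)) x‖ ^ 2 =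
      2⁻¹ * (‖fderiv ℝ u x‖ ^ 2 + ‖fderiv ℝ v x‖ ^ 2) := by
  rw [fderiv_const_mul (a := fun y => u y + v y) (hu.add hv),
    fderiv_const_mul (a := fun y => u y - v y) (hu.sub hv), fderiv_fun_add hu hv,
    fderiv_fun_sub hu hv, norm_smul, norm_smul, mul_pow, mul_pow, ← mul_add,
    parallelogram_law_with_norm_strongDual]
  norm_num
  ring

variable [MeasurableSpace E] [BorelSpace E] {μ : Measure E} [μ.IsOpenPosMeasure] {p A₀ : ℝ}
  {ι : Type*} {U : ι → E → ℝ}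

theorem SobolevInequality.eq_or_eq_neg_of_sq_eq (hS : SobolevInequality μ p A₀) (hp : 2 < p)
    (hu : IsSobolevAdmissible μ p u)
    (hv : IsSobolevAdmissible μ p v) (hue : IsSobolevExtremal μ p A₀ u)
    (hve : IsSobolevExtremal μ p A₀ v) (h : ∀ x, u x ^ 2 = v x ^ 2) : u = v ∨ u = -v := by
  set a := fun x => 2⁻¹ * (u x + v x) with ha_def
  set b := fun x => 2⁻¹ * (u x - v x) with hb_def
  have hmass x : |a x| ^ p + |b x| ^ p = |u x| ^ p := by
    rw [← show a x + b x = u x by ring]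
    exact abs_rpow_add_abs_rpow_of_mul_eq_zero (by linarith) (by linear_combination h x / 4)
  have henergy x : ‖fderiv ℝ a x‖ ^ 2 + ‖fderiv ℝ b x‖ ^ 2 =
      2⁻¹ * (‖fderiv ℝ u x‖ ^ 2 + ‖fderiv ℝ v x‖ ^ 2) :=
    norm_fderiv_half_add_sq_add_norm_fderiv_half_sub_sq (hu.1 x) (hv.1 x)
  have hEi : Integrable (fun x => 2⁻¹ * (‖fderiv ℝ u x‖ ^ 2 + ‖fderiv ℝ v x‖ ^ 2)) μ :=
    (hu.2.2.add hv.2.2).const_mul _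
  have ha : IsSobolevAdmissible μ p a :=
    .of_le ((hu.1.add hv.1).const_mul _) (by linarith)
      (fun x => by linarith [hmass x, rpow_nonneg (abs_nonneg (b x)) p]) hu.2.1
      (fun x => by linarith [henergy x, sq_nonneg ‖fderiv ℝ b x‖]) hEi
  have hb : IsSobolevAdmissible μ p b :=
    .of_le ((hu.1.sub hv.1).const_mul _) (by linarith)
      (fun x => by linarith [hmass x, rpow_nonneg (abs_nonneg (a x)) p]) hu.2.1
      (fun x => by linarith [henergy x, sq_nonneg ‖fderiv ℝ a x‖]) hEi
  have habs x : |u x| = |v x| := sq_eq_sq_iff_abs_eq_abs _ _ |>.1 (h x)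
  have hsplit : A₀ * (∫ x, ‖fderiv ℝ a x‖ ^ 2 ∂μ + ∫ x, ‖fderiv ℝ b x‖ ^ 2 ∂μ) =
      (∫ x, |a x| ^ p ∂μ + ∫ x, |b x| ^ p ∂μ) ^ (2 / p) := by
    rw [← integral_add ha.2.2 hb.2.2, integral_congr_ae (.of_forall henergy), integral_const_mul,
      integral_add hu.2.2 hv.2.2, ← integral_add ha.2.1 hb.2.1,
      integral_congr_ae (.of_forall hmass)]
    simp only [IsSobolevExtremal, habs] at hue hve ⊢
    linarith
  rcases hS.integral_eq_zero_or_integral_eq_zero hp ha hb hsplit.le with h0 | h0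
  · right
    funext x
    have := congrFun
      (eq_zero_of_integral_abs_rpow_eq_zero (by linarith) ha.1.continuous ha.2.1 h0) x
    simp only [ha_def, Pi.zero_apply, Pi.neg_apply] at this ⊢
    linarith
  · left
    funext x
    have := congrFun
      (eq_zero_of_integral_abs_rpow_eq_zero (by linarith) hb.1.continuous hb.2.1 h0) x
    simp only [hb_def, Pi.zero_apply] at this
    linarith

theorem SobolevInequality.eq_div_mul_of_sq_mul_sq_comm (hS : SobolevInequality μ p A₀)
    (hp : 2 < p) (hU : ∀ i, IsSobolevAdmissible μ p (U i))
    (hUe : ∀ i, IsSobolevExtremal μ p A₀ (U i))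
    (hsq : ∀ i j x y, U i x ^ 2 * U j y ^ 2 = U i y ^ 2 * U j x ^ 2) {j : ι} {x₀ : E}
    (hx₀ : U j x₀ ≠ 0) (i : ι) : U i = fun x => U i x₀ / U j x₀ * U j x := by
  set c := U i x₀ / U j x₀
  have hc : c * U j x₀ = U i x₀ := div_mul_cancel₀ _ hx₀
  have hsq' x : U i x ^ 2 = (c * U j x) ^ 2 := by
    rw [mul_pow, div_pow, div_mul_eq_mul_div, eq_div_iff (pow_ne_zero 2 hx₀)]
    exact hsq i j x x₀
  rcases hS.eq_or_eq_neg_of_sq_eq hp (hU i) ((hU j).const_mul c) (hUe i)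
    ((hUe j).const_mul (by linarith) (hU j).1 c) hsq' with h | h
  · exact h
  · have hx₀' : U i x₀ = 0 := by have := congrFun h x₀; simp only [Pi.neg_apply] at this; linarith
    have hc0 : c = 0 := by simp [c, hx₀']
    funext x
    simpa [hc0] using congrFun h x

theorem SobolevInequality.exists_eq_smul_of_vector_extremal [Fintype ι]
    {F : EuclideanSpace ℝ ι → ℝ} {M : ℝ}
    (hS : SobolevInequality μ p A₀) (hp : 2 < p) (hFcont : Continuous F)
    (hFpos : ∀ t, t ≠ 0 → 0 < F t) (hFhom : ∀ l : ℝ, 0 < l → ∀ t, F (l • t) = l ^ p * F t)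
    (hM : IsGreatest (F '' {t | ‖t‖ = 1}) M) (hU : ∀ i, IsSobolevAdmissible μ p (U i))
    (hUne : ∃ i, U i ≠ 0)
    (hext : (∫ x, F (WithLp.toLp 2 (fun i => U i x)) ∂μ) ^ (2 / p) =
      M ^ (2 / p) * A₀ * ∑ i, ∫ x, ‖fderiv ℝ (U i) x‖ ^ 2 ∂μ) :
    ∃ t : EuclideanSpace ℝ ι, ‖t‖ = 1 ∧ F t = M ∧
      ∃ u : E → ℝ, u ≠ 0 ∧ IsSobolevExtremal μ p A₀ u ∧ ∀ i x, U i x = t i * u x := by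
  obtain ⟨hUe, hFU, hMink⟩ :=
    hS.forall_isSobolevExtremal_and_eq_of_vector_extremal hp hFcont hFpos hFhom hM hU hext
  obtain ⟨j, hj⟩ := hUne
  obtain ⟨x₀, hx₀⟩ : ∃ x₀, U j x₀ ≠ 0 := by
    by_contra! h
    exact hj (funext h)
  set y : EuclideanSpace ℝ ι := WithLp.toLp 2 (fun i => U i x₀)
  have hy : y ≠ 0 := fun h => hx₀ (by simpa [y] using congrArg (· j) h)
  have hy0 : 0 < ‖y‖ := norm_pos_iff.2 hy
  have hT : ∫ x, ‖WithLp.toLp 2 (fun i => U i x)‖ ^ p ∂μ ≠ 0 := by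
    intro hT
    have hMj := hMink j x₀
    rw [hT, mul_zero, eq_comm, mul_eq_zero] at hMj
    rcases hMj with h | h
    · exact (rpow_pos_of_pos hy0 p).ne' h
    · exact hj (eq_zero_of_integral_abs_rpow_eq_zero (by linarith) (hU j).1.continuous (hU j).2.1 h)
  have hprop := hS.eq_div_mul_of_sq_mul_sq_comm hp hU hUe
    (sq_mul_sq_comm_of_abs_rpow_mul_eq hT (by linarith) hMink) hx₀
  refine ⟨‖y‖⁻¹ • y, by simp [norm_smul, hy0.ne'], ?_, fun x => ‖y‖ / U j x₀ * U j x,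
    fun h => ?_, (hUe j).const_mul (by linarith) (hU j).1 _, fun i x => ?_⟩
  · refine mul_left_cancel₀ (rpow_pos_of_pos hy0 p).ne' ?_
    rw [← apply_eq_norm_rpow_mul_apply_normalize hFhom hy, hFU x₀, mul_comm]
  · have := congrFun h x₀
    rw [Pi.zero_apply, div_mul_cancel₀ _ hx₀] at this
    exact hy0.ne' this
  · have hyi : y i = U i x₀ := rfl
    rw [congrFun (hprop i) x, PiLp.smul_apply, smul_eq_mul, hyi]
    field_simp

end InnerProductSpace

theorem stmt6_general (n k : ℕ) (hn : 3 ≤ n)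
    (p : ℝ) (hp : p = 2 * (n : ℝ) / ((n : ℝ) - 2))
    (A0 : ℝ)
    (hScalar : ∀ u : EuclideanSpace ℝ (Fin n) → ℝ, Differentiable ℝ u →
      Integrable (fun x => |u x| ^ p) →
      Integrable (fun x => ‖fderiv ℝ u x‖ ^ 2) →
      (∫ x, |u x| ^ p) ^ (2 / p) ≤ A0 * ∫ x, ‖fderiv ℝ u x‖ ^ 2)
    (F : EuclideanSpace ℝ (Fin k) → ℝ)
    (hFcont : Continuous F)
    (hFpos : ∀ t, t ≠ 0 → 0 < F t)
    (hFhom : ∀ l : ℝ, 0 < l → ∀ t, F (l • t) = l ^ p * F t)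
    (MF : ℝ) (hMF : IsGreatest (F '' {t | ‖t‖ = 1}) MF)
    (U : Fin k → EuclideanSpace ℝ (Fin n) → ℝ)
    (hUdiff : ∀ i, Differentiable ℝ (U i))
    (hUint : ∀ i, Integrable (fun x => |U i x| ^ p) ∧
      Integrable (fun x => ‖fderiv ℝ (U i) x‖ ^ 2))
    (hUne : ∃ i, U i ≠ 0)
    (hext : (∫ x, F (WithLp.toLp 2 (fun i => U i x))) ^ (2 / p) =
      MF ^ (2 / p) * A0 * ∑ i, ∫ x, ‖fderiv ℝ (U i) x‖ ^ 2) :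
    ∃ t : EuclideanSpace ℝ (Fin k), ‖t‖ = 1 ∧ F t = MF ∧
      ∃ u : EuclideanSpace ℝ (Fin n) → ℝ, u ≠ 0 ∧
        (∫ x, |u x| ^ p) ^ (2 / p) = A0 * ∫ x, ‖fderiv ℝ u x‖ ^ 2 ∧
        ∀ i x, U i x = t i * u x := by
  have hp2 : 2 < p := by
    have hn' : (3 : ℝ) ≤ n := by exact_mod_cast hn
    rw [hp, lt_div_iff₀ (by linarith)]
    linarith
  exact SobolevInequality.exists_eq_smul_of_vector_extremal
    (fun u hu => hScalar u hu.1 hu.2.1 hu.2.2) hp2 hFcont hFpos hFhom hMF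
    (fun i => ⟨hUdiff i, hUint i⟩) hUne hext

/-- Characterization of extremal maps for the sharp vector Euclidean Sobolev
inequality: any nonzero extremal map `U` is of the form `U = t u` with
`t ∈ S^{k-1}`, `F t = M_F`, and `u` a scalar Sobolev extremal function. -/
theorem stmt6 (n k : ℕ) (hn : 3 ≤ n) (hk : 1 ≤ k)
    (p : ℝ) (hp : p = 2 * (n : ℝ) / ((n : ℝ) - 2))
    (A0 : ℝ)
    (hScalar : ∀ u : EuclideanSpace ℝ (Fin n) → ℝ, Differentiable ℝ u →
      Integrable (fun x => |u x| ^ p) →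
      Integrable (fun x => ‖fderiv ℝ u x‖ ^ 2) →
      (∫ x, |u x| ^ p) ^ (2 / p) ≤ A0 * ∫ x, ‖fderiv ℝ u x‖ ^ 2)
    (F : EuclideanSpace ℝ (Fin k) → ℝ)
    (hFcont : Continuous F)
    (hFpos : ∀ t, t ≠ 0 → 0 < F t)
    (hFhom : ∀ l : ℝ, 0 < l → ∀ t, F (l • t) = l ^ p * F t)
    (MF : ℝ) (hMF : IsGreatest (F '' {t | ‖t‖ = 1}) MF)
    (U : Fin k → EuclideanSpace ℝ (Fin n) → ℝ)
    (hUdiff : ∀ i, Differentiable ℝ (U i))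
    (hUint : ∀ i, Integrable (fun x => |U i x| ^ p) ∧
      Integrable (fun x => ‖fderiv ℝ (U i) x‖ ^ 2))
    (hUne : ∃ i, U i ≠ 0)
    (hext : (∫ x, F (WithLp.toLp 2 (fun i => U i x))) ^ (2 / p) =
      MF ^ (2 / p) * A0 * ∑ i, ∫ x, ‖fderiv ℝ (U i) x‖ ^ 2) :
    ∃ t : EuclideanSpace ℝ (Fin k), ‖t‖ = 1 ∧ F t = MF ∧
      ∃ u : EuclideanSpace ℝ (Fin n) → ℝ, u ≠ 0 ∧
        (∫ x, |u x| ^ p) ^ (2 / p) = A0 * ∫ x, ‖fderiv ℝ u x‖ ^ 2 ∧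
        ∀ i x, U i x = t i * u x :=
  stmt6_general n k hn p hp A0 hScalar F hFcont hFpos hFhom MF hMF U hUdiff hUint hUne hext
end

section
/- As a corollary of the approximation scheme, for any continuous positive degree-p homogeneous H₀ : M × ℝ^k → ℝ (p > 1) and any ε ∈ (0,1) there exists a C¹ (in t) positive degree-p homogeneous H with (1−ε) H₀(x,t) ≤ H(x,t) ≤ (1+ε) H₀(x,t) for all (x,t) ∈ M × ℝ^k. -/
/-!
By Stone–Weierstrass, the restrictions to the unit sphere `S` of degree-`0` homogeneous functions
that are `C¹` away from the origin are uniformly dense in `C(S, ℝ)`. Viewing `H₀` as the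
continuous map `x ↦ H₀(x, ·)|_S` into `C(S, ℝ)`, a partition of unity on the compact space `M`
glues finitely many such approximants into `H(x, t) = ∑ wᵢ(x) ‖t‖ᵖ Gᵢ(t)`, which is within
`ε · min_{M × S} H₀` of `H₀` on `M × S`, hence within a factor `1 ± ε` everywhere by homogeneity.
Each `‖t‖ᵖ Gᵢ(t)` is `C¹` at the origin too, because `p > 1`: homogeneity gives
`|f t| ≤ C ‖t‖ᵖ` and `‖Df t‖ ≤ C' ‖t‖ᵖ⁻¹`.
-/

open Metric Filter Topology

lemma inv_norm_smul_mem_unitSphere {E : Type*} [NormedAddCommGroup E] [NormedSpace ℝ E] {t : E}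
    (ht : t ≠ 0) : ‖t‖⁻¹ • t ∈ sphere (0 : E) 1 := by
  rw [mem_sphere_zero_iff_norm, norm_smul, norm_inv, norm_norm,
    inv_mul_cancel₀ (norm_ne_zero_iff.mpr ht)]

lemma unitSphere_subset_compl_zero (E : Type*) [NormedAddCommGroup E] :
    sphere (0 : E) 1 ⊆ {0}ᶜ :=
  fun _ hu => ne_of_mem_sphere hu one_ne_zero

section Homogeneous

variable {E : Type*} [NormedAddCommGroup E] [NormedSpace ℝ E]

def IsPosHomogeneous (p : ℝ) (f : E → ℝ) : Prop :=
  ∀ l : ℝ, 0 < l → ∀ t, f (l • t) = l ^ p * f t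

namespace IsPosHomogeneous

variable {p q : ℝ} {f g : E → ℝ}

lemma apply_zero (hf : IsPosHomogeneous p f) (hp : 0 < p) : f 0 = 0 := by
  have h := hf 2 two_pos 0
  rw [smul_zero] at h
  have h2 : (1 : ℝ) < 2 ^ p := Real.one_lt_rpow one_lt_two hp
  by_contra h0
  exact h2.ne' (mul_eq_right₀ h0 |>.mp h.symm)

lemma mul (hf : IsPosHomogeneous p f) (hg : IsPosHomogeneous q g) :
    IsPosHomogeneous (p + q) (fun t => f t * g t) := by
  intro l hl t
  simp only [hf l hl, hg l hl, Real.rpow_add hl]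
  ring

lemma const_mul (hf : IsPosHomogeneous p f) (c : ℝ) :
    IsPosHomogeneous p (fun t => c * f t) := by
  intro l hl t
  dsimp only
  rw [hf l hl]
  ring

lemma eq_norm_rpow_mul (hf : IsPosHomogeneous p f) {t : E} (ht : t ≠ 0) :
    f t = ‖t‖ ^ p * f (‖t‖⁻¹ • t) := by
  rw [← hf _ (norm_pos_iff.mpr ht), smul_inv_smul₀ (norm_ne_zero_iff.mpr ht)]

lemma le_of_forall_mem_sphere (hf : IsPosHomogeneous p f) (hg : IsPosHomogeneous p g)
    (hp : 0 < p) (h : ∀ s ∈ sphere (0 : E) 1, f s ≤ g s) (t : E) : f t ≤ g t := by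
  rcases eq_or_ne t 0 with rfl | ht
  · rw [hf.apply_zero hp, hg.apply_zero hp]
  · rw [hf.eq_norm_rpow_mul ht, hg.eq_norm_rpow_mul ht]
    exact mul_le_mul_of_nonneg_left (h _ (inv_norm_smul_mem_unitSphere ht)) (by positivity)

end IsPosHomogeneous

lemma isPosHomogeneous_norm_rpow (p : ℝ) :
    IsPosHomogeneous p (fun t : E => ‖t‖ ^ p) := by
  intro l hl t
  dsimp only
  rw [norm_smul, Real.norm_of_nonneg hl.le, Real.mul_rpow hl.le (norm_nonneg t)]

end Homogeneous

section Calculus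

variable {E F : Type*} [NormedAddCommGroup E] [NormedAddCommGroup F]

lemma tendsto_norm_rpow_nhds_zero {q : ℝ} (hq : 0 < q) :
    Tendsto (fun t : E => ‖t‖ ^ q) (𝓝 0) (𝓝 0) := by
  simpa [Real.zero_rpow hq.ne'] using (tendsto_norm_zero (E := E)).rpow_const (Or.inr hq.le)

lemma hasFDerivAt_zero_of_norm_le_mul_rpow [NormedSpace ℝ E] [NormedSpace ℝ F] {f : E → F}
    {C p : ℝ} (hp : 1 < p) (hf : ∀ t, ‖f t‖ ≤ C * ‖t‖ ^ p) : HasFDerivAt f (0 : E →L[ℝ] F) 0 := by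
  have hf0 : f 0 = 0 := by simpa [Real.zero_rpow (by linarith : p ≠ 0)] using hf 0
  rw [hasFDerivAt_iff_isLittleO_nhds_zero]
  simp only [zero_add, hf0, sub_zero, zero_apply]
  refine Asymptotics.isLittleO_iff.mpr fun c hc => ?_
  have hsmall : Tendsto (fun t : E => C * ‖t‖ ^ (p - 1)) (𝓝 0) (𝓝 0) := by
    simpa using (tendsto_norm_rpow_nhds_zero (sub_pos.mpr hp)).const_mul C
  filter_upwards [hsmall.eventually_lt_const hc] with t ht
  calc ‖f t‖ ≤ C * ‖t‖ ^ p := hf t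
    _ = C * ‖t‖ ^ (p - 1) * ‖t‖ := by
      rw [mul_assoc, ← Real.rpow_add_one' (norm_nonneg t) (by linarith), sub_add_cancel]
    _ ≤ c * ‖t‖ := mul_le_mul_of_nonneg_right ht.le (norm_nonneg t)

lemma exists_norm_le_mul_norm_rpow [NormedSpace ℝ E] [ProperSpace E] {g : E → F} {q : ℝ}
    (hg : ContinuousOn g (sphere 0 1))
    (hhom : ∀ l : ℝ, 0 < l → ∀ t, t ≠ 0 → ‖g (l • t)‖ = l ^ q * ‖g t‖) :
    ∃ C, ∀ t, t ≠ 0 → ‖g t‖ ≤ C * ‖t‖ ^ q := by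
  obtain ⟨C, hC⟩ := (isCompact_sphere (0 : E) 1).exists_bound_of_continuousOn hg
  refine ⟨C, fun t ht => ?_⟩
  have hu := inv_norm_smul_mem_unitSphere ht
  have hscale := hhom ‖t‖ (norm_pos_iff.mpr ht) _ (ne_of_mem_sphere hu one_ne_zero)
  rw [smul_inv_smul₀ (norm_ne_zero_iff.mpr ht)] at hscale
  rw [hscale, mul_comm C]
  exact mul_le_mul_of_nonneg_left (hC _ hu) (by positivity)

end Calculus

namespace IsPosHomogeneous

variable {E : Type*} [NormedAddCommGroup E] [NormedSpace ℝ E] {p : ℝ} {f : E → ℝ}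

lemma norm_fderiv_smul (hf : IsPosHomogeneous p f) {l : ℝ} (hl : 0 < l) {t : E}
    (ht : DifferentiableAt ℝ f t) (hlt : DifferentiableAt ℝ f (l • t)) :
    ‖fderiv ℝ f (l • t)‖ = l ^ (p - 1) * ‖fderiv ℝ f t‖ := by
  have hchain : HasFDerivAt (fun u => f (l • u)) (l • fderiv ℝ f (l • t)) t := by
    have h := hlt.hasFDerivAt.comp t ((hasFDerivAt_id t).const_smul l)
    rwa [ContinuousLinearMap.comp_smul, ContinuousLinearMap.comp_id] at h
  have hscaled : HasFDerivAt (fun u => f (l • u)) (l ^ p • fderiv ℝ f t) t := by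
    simpa only [hf l hl] using ht.hasFDerivAt.const_mul (l ^ p)
  have hnorm := congrArg norm (hchain.unique hscaled)
  rw [norm_smul, norm_smul, Real.norm_of_nonneg hl.le,
    Real.norm_of_nonneg (Real.rpow_nonneg hl.le p)] at hnorm
  rw [Real.rpow_sub_one hl.ne', div_mul_eq_mul_div, eq_div_iff hl.ne', mul_comm, hnorm]

lemma contDiff_one [ProperSpace E] (hf : IsPosHomogeneous p f) (hp : 1 < p)
    (hsm : ContDiffOn ℝ 1 f {0}ᶜ) : ContDiff ℝ 1 f := by
  have hdiff : ∀ t : E, t ≠ 0 → DifferentiableAt ℝ f t := fun t ht =>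
    (hsm.contDiffAt (isOpen_compl_singleton.mem_nhds ht)).differentiableAt one_ne_zero
  have hsphere := unitSphere_subset_compl_zero E
  have hDcont : ContinuousOn (fderiv ℝ f) {0}ᶜ :=
    hsm.continuousOn_fderiv_of_isOpen isOpen_compl_singleton le_rfl
  obtain ⟨C, hC⟩ := exists_norm_le_mul_norm_rpow (hsm.continuousOn.mono hsphere)
    fun l hl t _ => by rw [hf l hl, norm_mul, Real.norm_of_nonneg (Real.rpow_nonneg hl.le p)]
  obtain ⟨D, hD⟩ := exists_norm_le_mul_norm_rpow (hDcont.mono hsphere) fun l hl t ht =>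
    hf.norm_fderiv_smul hl (hdiff t ht) (hdiff _ (smul_ne_zero hl.ne' ht))
  have hf0 : f 0 = 0 := hf.apply_zero (by linarith)
  have hfderiv0 : HasFDerivAt f (0 : E →L[ℝ] ℝ) 0 := by
    refine hasFDerivAt_zero_of_norm_le_mul_rpow (C := C) hp fun t => ?_
    rcases eq_or_ne t 0 with rfl | ht
    · simp [hf0, Real.zero_rpow (by linarith : p ≠ 0)]
    · exact hC t ht
  have hD' : ∀ t, ‖fderiv ℝ f t‖ ≤ D * ‖t‖ ^ (p - 1) := fun t => by
    rcases eq_or_ne t 0 with rfl | ht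
    · simp [hfderiv0.fderiv, Real.zero_rpow (by linarith : p - 1 ≠ 0)]
    · exact hD t ht
  refine contDiff_one_iff_fderiv.mpr ⟨fun t => ?_, continuous_iff_continuousAt.mpr fun t => ?_⟩
  · rcases eq_or_ne t 0 with rfl | ht
    exacts [hfderiv0.differentiableAt, hdiff t ht]
  · rcases eq_or_ne t 0 with rfl | ht
    · rw [ContinuousAt, hfderiv0.fderiv]
      exact squeeze_zero_norm hD' (by simpa using
        (tendsto_norm_rpow_nhds_zero (sub_pos.mpr hp)).const_mul D)
    · exact hDcont.continuousAt (isOpen_compl_singleton.mem_nhds ht)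

end IsPosHomogeneous

section StoneWeierstrass

variable (E : Type*) [NormedAddCommGroup E] [InnerProductSpace ℝ E]

def homogeneousC1Subalgebra : Subalgebra ℝ C(sphere (0 : E) 1, ℝ) where
  carrier := {g | ∃ G : E → ℝ, IsPosHomogeneous 0 G ∧ ContDiffOn ℝ 1 G {0}ᶜ ∧
    ∀ s, g s = G s}
  mul_mem' := by
    rintro a b ⟨Ga, hGa, hGa', ha⟩ ⟨Gb, hGb, hGb', hb⟩
    exact ⟨fun t => Ga t * Gb t, by simpa using hGa.mul hGb, hGa'.mul hGb',
      fun s => by simp [ha, hb]⟩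
  add_mem' := by
    rintro a b ⟨Ga, hGa, hGa', ha⟩ ⟨Gb, hGb, hGb', hb⟩
    refine ⟨Ga + Gb, fun l hl t => ?_, hGa'.add hGb', fun s => by simp [ha, hb]⟩
    simp [hGa l hl, hGb l hl]
  algebraMap_mem' c := ⟨fun _ => c, fun _ _ _ => by simp, contDiffOn_const, fun _ => rfl⟩

lemma homogeneousC1Subalgebra_separatesPoints :
    (homogeneousC1Subalgebra E).SeparatesPoints := by
  intro x y hxy
  set G : E → ℝ := fun t => inner ℝ ((x : E) - y) t / ‖t‖
  have hG : IsPosHomogeneous 0 G := fun l hl t => by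
    simp [G, inner_smul_right, norm_smul, abs_of_pos hl, mul_div_mul_left _ _ hl.ne']
  have hG' : ContDiffOn ℝ 1 G {0}ᶜ :=
    (contDiff_const.inner ℝ contDiff_id).contDiffOn.div
      (fun t ht => (contDiffAt_norm ℝ ht).contDiffWithinAt) fun t ht => norm_ne_zero_iff.mpr ht
  refine ⟨_, ⟨⟨_, (hG'.continuousOn.mono (unitSphere_subset_compl_zero E)).domRestrict⟩,
    ⟨G, hG, hG', fun _ => rfl⟩, rfl⟩, ?_⟩
  have hval : ∀ s : sphere (0 : E) 1, G s = inner ℝ ((x : E) - y) s := fun s => by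
    simp [G, norm_eq_of_mem_sphere s]
  rw [Ne, ← sub_eq_zero]
  simpa [hval, ← inner_sub_right, sub_eq_zero, Subtype.ext_iff] using hxy

lemma dense_homogeneousC1Subalgebra [FiniteDimensional ℝ E] :
    Dense (homogeneousC1Subalgebra E : Set C(sphere (0 : E) 1, ℝ)) := by
  rw [dense_iff_closure_eq, ← Subalgebra.topologicalClosure_coe,
    ContinuousMap.subalgebra_topologicalClosure_eq_top_of_separatesPoints _
      (homogeneousC1Subalgebra_separatesPoints E), Algebra.coe_top]

end StoneWeierstrass

section Approximation

variable {M X : Type*} [TopologicalSpace M] [CompactSpace M]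

-- `M` need not be Hausdorff, so the partition of unity is pulled back from the metric of `X`.
lemma exists_partitionOfUnity_dist_lt [PseudoMetricSpace X] {Φ : M → X} (hΦ : Continuous Φ)
    {S : Set X} (hS : Dense S) {δ : ℝ} (hδ : 0 < δ) :
    ∃ t : Finset X, ↑t ⊆ S ∧ ∃ w : X → M → ℝ, (∀ c, Continuous (w c)) ∧ (∀ c x, 0 ≤ w c x) ∧
      (∀ x, ∑ c ∈ t, w c x = 1) ∧ ∀ c x, w c x ≠ 0 → dist (Φ x) c < δ := by
  obtain ⟨b, hbS, hb, hcover⟩ := isCompact_univ.elim_finite_subcover_image (b := S)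
    (c := fun c => Φ ⁻¹' ball c δ) (fun c _ => isOpen_ball.preimage hΦ) fun x _ => by
      obtain ⟨c, hc, hxc⟩ := hS.exists_dist_lt (Φ x) hδ
      exact Set.mem_iUnion₂.mpr ⟨c, hc, mem_ball.mpr hxc⟩
  set ψ : X → M → ℝ := fun c x => max (δ - dist (Φ x) c) 0
  have hψ : ∀ c, Continuous (ψ c) := fun c =>
    (continuous_const.sub (hΦ.dist continuous_const)).max continuous_const
  have hsum : ∀ x, 0 < ∑ c ∈ hb.toFinset, ψ c x := fun x => by
    obtain ⟨c, hc, hxc⟩ := Set.mem_iUnion₂.mp (hcover (Set.mem_univ x))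
    exact Finset.sum_pos' (fun _ _ => le_max_right _ _)
      ⟨c, hb.mem_toFinset.mpr hc, lt_max_of_lt_left (sub_pos.mpr hxc)⟩
  refine ⟨hb.toFinset, by simpa using hbS, fun c x => ψ c x / ∑ c' ∈ hb.toFinset, ψ c' x,
    fun c => (hψ c).div (continuous_finsetSum _ fun c' _ => hψ c') fun x => (hsum x).ne',
    fun c x => div_nonneg (le_max_right _ _) (hsum x).le,
    fun x => by rw [← Finset.sum_div, div_self (hsum x).ne'], fun c x hcx => ?_⟩
  by_contra! hfar
  exact hcx (by simp [ψ, max_eq_right (sub_nonpos.mpr hfar)])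

lemma exists_finset_sum_smul_dist_lt [SeminormedAddCommGroup X] [NormedSpace ℝ X] {Φ : M → X}
    (hΦ : Continuous Φ) {S : Set X} (hS : Dense S) {δ : ℝ} (hδ : 0 < δ) :
    ∃ t : Finset X, ↑t ⊆ S ∧ ∃ w : X → M → ℝ, (∀ c, Continuous (w c)) ∧
      ∀ x, dist (∑ c ∈ t, w c x • c) (Φ x) < δ := by
  classical
  obtain ⟨t, htS, w, hw, hw0, hw1, hwδ⟩ := exists_partitionOfUnity_dist_lt hΦ hS hδ
  refine ⟨t, htS, w, hw, fun x => ?_⟩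
  have hsupp : ∀ c ∈ t, w c x • c ≠ 0 → w c x ≠ 0 := fun c _ h h0 => h (by simp [h0])
  rw [← mem_ball, ← Finset.sum_filter_of_ne hsupp]
  refine (convex_ball (Φ x) δ).sum_mem (fun c _ => hw0 c x) ?_ fun c hc => ?_
  · rw [Finset.sum_filter_ne_zero, hw1 x]
  · rw [mem_ball, dist_comm]
    exact hwδ c x (Finset.mem_filter.mp hc).2

end Approximation

theorem exists_homogeneous_contDiff_near {M E : Type*} [TopologicalSpace M] [CompactSpace M]
    [NormedAddCommGroup E] [InnerProductSpace ℝ E] [FiniteDimensional ℝ E] {p : ℝ} (hp : 1 < p)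
    (Φ : C(M, C(sphere (0 : E) 1, ℝ))) {δ : ℝ} (hδ : 0 < δ) :
    ∃ H : M × E → ℝ, Continuous H ∧ (∀ x, ContDiff ℝ 1 fun y => H (x, y)) ∧
      (∀ x, IsPosHomogeneous p fun y => H (x, y)) ∧
      ∀ x (s : sphere (0 : E) 1), |H (x, s) - Φ x s| < δ := by
  obtain ⟨t, htA, w, hw, happrox⟩ :=
    exists_finset_sum_smul_dist_lt Φ.continuous (dense_homogeneousC1Subalgebra E) hδ
  have htA' : ∀ c ∈ t, ∃ G : E → ℝ, IsPosHomogeneous 0 G ∧ ContDiffOn ℝ 1 G {0}ᶜ ∧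
      ∀ s, c s = G s := fun c hc => htA hc
  choose! G hG hG' hGc using htA'
  have hnorm : IsPosHomogeneous p fun y : E => ‖y‖ ^ p := isPosHomogeneous_norm_rpow p
  have hext : ∀ c ∈ t, IsPosHomogeneous p fun y => ‖y‖ ^ p * G c y := fun c hc => by
    simpa using hnorm.mul (hG c hc)
  have hC1 : ∀ c ∈ t, ContDiff ℝ 1 fun y => ‖y‖ ^ p * G c y := fun c hc =>
    (hext c hc).contDiff_one hp <| ContDiffOn.mul (fun y hy =>
      ((contDiffAt_norm ℝ hy).rpow_const_of_ne (norm_ne_zero_iff.mpr hy)).contDiffWithinAt)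
      (hG' c hc)
  refine ⟨fun q => ∑ c ∈ t, w c q.1 * (‖q.2‖ ^ p * G c q.2), ?_, fun x => ?_, fun x => ?_,
    fun x s => ?_⟩
  · exact continuous_finsetSum _ fun c hc =>
      ((hw c).comp continuous_fst).mul ((hC1 c hc).continuous.comp continuous_snd)
  · change ContDiff ℝ 1 fun y => ∑ c ∈ t, w c x * (‖y‖ ^ p * G c y)
    exact ContDiff.sum fun c hc => contDiff_const.mul (hC1 c hc)
  · intro l hl y
    simp only [Finset.mul_sum]
    refine Finset.sum_congr rfl fun c hc => ?_
    rw [show ‖l • y‖ ^ p * G c (l • y) = _ from hext c hc l hl y]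
    ring
  · have hval : ∑ c ∈ t, w c x * (‖(s : E)‖ ^ p * G c s) = (∑ c ∈ t, w c x • c) s := by
      simp only [norm_eq_of_mem_sphere s, Real.one_rpow, one_mul, ContinuousMap.coe_sum,
        Finset.sum_apply, ContinuousMap.coe_smul, Pi.smul_apply, smul_eq_mul]
      exact Finset.sum_congr rfl fun c hc => by rw [hGc c hc]
    change |∑ c ∈ t, w c x * (‖(s : E)‖ ^ p * G c s) - Φ x s| < δ
    rw [hval, ← Real.dist_eq]
    exact (ContinuousMap.dist_apply_le_dist s).trans_lt (happrox x)

theorem stmt8_general (M : Type*) [TopologicalSpace M] [CompactSpace M]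
    (k : ℕ) (p : ℝ) (hp : 1 < p)
    (H0 : M × EuclideanSpace ℝ (Fin k) → ℝ)
    (hcont : Continuous H0)
    (hpos : ∀ x t, t ≠ 0 → 0 < H0 (x, t))
    (hhom : ∀ (x : M) (l : ℝ), 0 < l → ∀ t, H0 (x, l • t) = l ^ p * H0 (x, t))
    (ε : ℝ) (hε : ε ∈ Set.Ioo (0 : ℝ) 1) :
    ∃ H : M × EuclideanSpace ℝ (Fin k) → ℝ,
      Continuous H ∧
      (∀ x t, t ≠ 0 → 0 < H (x, t)) ∧
      (∀ x : M, ContDiff ℝ 1 (fun t => H (x, t))) ∧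
      (∀ (x : M) (l : ℝ), 0 < l → ∀ t, H (x, l • t) = l ^ p * H (x, t)) ∧
      ∀ x t, (1 - ε) * H0 (x, t) ≤ H (x, t) ∧ H (x, t) ≤ (1 + ε) * H0 (x, t) := by
  obtain ⟨hε0, hε1⟩ := hε
  obtain ⟨m, hm, hmH0⟩ := (isCompact_univ.prod (isCompact_sphere 0 1)).exists_forall_le'
    hcont.continuousOn fun q hq => hpos q.1 q.2 (ne_of_mem_sphere hq.2 one_ne_zero)
  obtain ⟨H, hHcont, hHC1, hHhom, hHnear⟩ := exists_homogeneous_contDiff_near hp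
    (ContinuousMap.curry ⟨fun q : M × sphere (0 : EuclideanSpace ℝ (Fin k)) 1 => H0 (q.1, q.2),
      by fun_prop⟩) (mul_pos hε0 hm)
  have hbounds : ∀ x t, (1 - ε) * H0 (x, t) ≤ H (x, t) ∧ H (x, t) ≤ (1 + ε) * H0 (x, t) := by
    intro x
    have hH0 : IsPosHomogeneous p fun t => H0 (x, t) := hhom x
    have hnear : ∀ s ∈ sphere (0 : EuclideanSpace ℝ (Fin k)) 1,
        |H (x, s) - H0 (x, s)| ≤ ε * H0 (x, s) := fun s hs =>
      (hHnear x ⟨s, hs⟩).le.trans (mul_le_mul_of_nonneg_left (hmH0 (x, s) ⟨trivial, hs⟩) hε0.le)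
    refine fun t => ⟨(hH0.const_mul _).le_of_forall_mem_sphere (hHhom x) (by linarith)
      (fun s hs => ?_) t, (hHhom x).le_of_forall_mem_sphere (hH0.const_mul _) (by linarith)
      (fun s hs => ?_) t⟩ <;> linarith [abs_le.mp (hnear s hs)]
  exact ⟨H, hHcont, fun x t ht => (mul_pos (sub_pos.mpr hε1) (hpos x t ht)).trans_le
    (hbounds x t).1, hHC1, hHhom, hbounds⟩

/-- Corollary of the approximation scheme: for any continuous positive degree-`p`
homogeneous `H₀` (`p > 1`) and any `ε ∈ (0,1)` there is a `C¹`-in-`t` positive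
degree-`p` homogeneous `H` with `(1-ε) H₀ ≤ H ≤ (1+ε) H₀` everywhere. -/
theorem stmt8 (M : Type*) [TopologicalSpace M] [CompactSpace M]
    (k : ℕ) (hk : 1 ≤ k) (p : ℝ) (hp : 1 < p)
    (H0 : M × EuclideanSpace ℝ (Fin k) → ℝ)
    (hcont : Continuous H0)
    (hpos : ∀ x t, t ≠ 0 → 0 < H0 (x, t))
    (hhom : ∀ (x : M) (l : ℝ), 0 < l → ∀ t, H0 (x, l • t) = l ^ p * H0 (x, t))
    (ε : ℝ) (hε : ε ∈ Set.Ioo (0 : ℝ) 1) :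
    ∃ H : M × EuclideanSpace ℝ (Fin k) → ℝ,
      Continuous H ∧
      (∀ x t, t ≠ 0 → 0 < H (x, t)) ∧
      (∀ x : M, ContDiff ℝ 1 (fun t => H (x, t))) ∧
      (∀ (x : M) (l : ℝ), 0 < l → ∀ t, H (x, l • t) = l ^ p * H (x, t)) ∧
      ∀ x t, (1 - ε) * H0 (x, t) ≤ H (x, t) ∧ H (x, t) ≤ (1 + ε) * H0 (x, t) :=
  stmt8_general M k p hp H0 hcont hpos hhom ε hε
end
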